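/- Let $\widetilde S$ be a continuous semimartingale with $d\widetilde S_t = (\mu \mathbf{1}_{S_t \neq \zeta} - r)\widetilde S_t\,dt + \sigma \widetilde S_t \mathbf{1}_{S_t \neq \zeta}\,dB_t$, where $S_t = e^{rt}\widetilde S_t$ spends time at $\zeta$ according to $\mathbf{1}_{S_t = \zeta}\,dt = \rho\,dL_t^{\zeta}(S)$ with $\rho > 0$ and $L^{\zeta}(S)$ the local time at $\zeta$. If $r \neq 0$, then the strategy $H_t = \mathrm{sgn}(-r) e^{rt} \mathbf{1}_{S_t = \zeta}$ satisfies $\int_0^t H_s\,d\widetilde S_s = |r| \rho \zeta L_t^{\zeta}(S) \ge 0$ for all $t \ge 0$. -/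

import Mathlib

open MeasureTheory ProbabilityTheory Filter Set

noncomputable section

variable {Ω : Type*} {mΩ : MeasurableSpace Ω}

/-- A process is a local martingale if there is a localizing sequence of stopping times. -/
def IsLocalMartingale (F : Filtration ℝ mΩ) (X : ℝ → Ω → ℝ) (P : Measure Ω) : Prop :=
  ∃ τ : ℕ → Ω → ℝ,
    (∀ n, IsStoppingTime F (fun ω => ((τ n ω : ℝ) : WithTop ℝ))) ∧
    (∀ᵐ ω ∂P, Tendsto (fun n => τ n ω) atTop atTop) ∧
    (∀ n, Martingale (fun t ω => X (min t (τ n ω)) ω) F P)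

/-- A standard Brownian motion with respect to a filtration. -/
structure IsBrownianMotion (F : Filtration ℝ mΩ) (B : ℝ → Ω → ℝ) (P : Measure Ω) : Prop where
  init : ∀ᵐ ω ∂P, B 0 ω = 0
  adapted : Adapted F B
  cont : ∀ᵐ ω ∂P, Continuous fun t => B t ω
  incr_law : ∀ s t : ℝ, 0 ≤ s → s ≤ t →
    P.map (fun ω => B t ω - B s ω) = gaussianReal 0 (Real.toNNReal (t - s))
  incr_indep : ∀ s t : ℝ, 0 ≤ s → s ≤ t →
    Indep (MeasurableSpace.comap (fun ω => B t ω - B s ω) (borel ℝ)) (F s) P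


/-! On `{S = ζ}` the diffusion coefficient of `S̃` vanishes and the drift is `-r S̃ = -r e^{-rt} ζ`,
so the strategy `sgn(-r) e^{rt} 1_{S = ζ}` earns `|r| ζ` per unit of time spent at `ζ`; the sticky
occupation identity turns that time into `ρ L^ζ(S)`. -/

theorem Real.sign_mul_self_eq_abs (r : ℝ) : Real.sign r * r = |r| := by
  rcases lt_trichotomy r 0 with h | rfl | h
  · rw [Real.sign_of_neg h, abs_of_neg h]; ring
  · simp
  · rw [Real.sign_of_pos h, abs_of_pos h]; ring

def stickyStrategy (S : ℝ → Ω → ℝ) (r ζ s : ℝ) (ω : Ω) : ℝ :=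
  Real.sign (-r) * Real.exp (r * s) * if S s ω = ζ then 1 else 0

section stickyStrategy

variable (S : ℝ → Ω → ℝ) (r ζ : ℝ) (ω : Ω)

theorem stickyStrategy_mul_drift (μ s : ℝ) :
    stickyStrategy S r ζ s ω
        * ((μ * (if S s ω = ζ then 0 else 1) - r) * (Real.exp (-r * s) * S s ω))
      = |r| * ζ * if S s ω = ζ then 1 else 0 := by
  unfold stickyStrategy
  split_ifs with h
  · have hexp : Real.exp (r * s) * Real.exp (-r * s) = 1 := by
      rw [← Real.exp_add, ← Real.exp_zero]; ring_nf
    rw [h, ← abs_neg, ← Real.sign_mul_self_eq_abs (-r)]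
    linear_combination (Real.sign (-r) * -r * ζ) * hexp
  · simp

theorem stickyStrategy_mul_diffusion (σ s : ℝ) :
    stickyStrategy S r ζ s ω
        * (σ * (Real.exp (-r * s) * S s ω) * (if S s ω = ζ then 0 else 1)) = 0 := by
  unfold stickyStrategy
  split_ifs <;> simp

theorem integral_stickyStrategy_mul_drift (μ t : ℝ) :
    ∫ s in (0:ℝ)..t, stickyStrategy S r ζ s ω
        * ((μ * (if S s ω = ζ then 0 else 1) - r) * (Real.exp (-r * s) * S s ω))
      = |r| * ζ * ∫ s in (0:ℝ)..t, if S s ω = ζ then (1:ℝ) else 0 := by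
  simp only [stickyStrategy_mul_drift, intervalIntegral.integral_const_mul]

end stickyStrategy

/-- `SIS H` and `SIB H` stand for `∫ H dS̃` and `∫ H dB`; `hassoc` is the decomposition of `dS̃`
and `hsticky` the occupation identity `∫₀ᵗ 1_{S_s = ζ} ds = ρ L_t`. -/
theorem sticky_arbitrage_gains_identity_general
    (P : Measure Ω)
    (S L : ℝ → Ω → ℝ) (μ r σ ζ ρ : ℝ)
    (hζ : 0 < ζ)
    (hsticky : ∀ᵐ ω ∂P, ∀ t ≥ (0:ℝ),
      (∫ s in (0:ℝ)..t, (if S s ω = ζ then (1:ℝ) else 0)) = ρ * L t ω)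
    (SIB : (ℝ → Ω → ℝ) → ℝ → Ω → ℝ)
    (SIS : (ℝ → Ω → ℝ) → ℝ → Ω → ℝ)
    (hassoc : ∀ H : ℝ → Ω → ℝ, ∀ᵐ ω ∂P, ∀ t ≥ (0:ℝ),
      SIS H t ω
        = (∫ s in (0:ℝ)..t,
            H s ω * ((μ * (if S s ω = ζ then 0 else 1) - r) * (Real.exp (-r*s) * S s ω)))
          + SIB (fun s ω' => H s ω'
              * (σ * (Real.exp (-r*s) * S s ω') * (if S s ω' = ζ then 0 else 1))) t ω)
    (hSIB_zero : ∀ H : ℝ → Ω → ℝ, (∀ t ω, H t ω = 0) → ∀ t ω, SIB H t ω = 0) :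
    ∀ᵐ ω ∂P, ∀ t ≥ (0:ℝ),
      SIS (fun s ω' => Real.sign (-r) * Real.exp (r*s)
          * (if S s ω' = ζ then 1 else 0)) t ω
        = |r| * ρ * ζ * L t ω
      ∧ 0 ≤ SIS (fun s ω' => Real.sign (-r) * Real.exp (r*s)
          * (if S s ω' = ζ then 1 else 0)) t ω := by
  filter_upwards [hassoc (stickyStrategy S r ζ), hsticky] with ω hgains hocc t ht
  have hgains_eq : SIS (stickyStrategy S r ζ) t ω
      = |r| * ζ * ∫ s in (0:ℝ)..t, if S s ω = ζ then (1:ℝ) else 0 := by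
    rw [hgains t ht, hSIB_zero _ (fun s ω' => stickyStrategy_mul_diffusion S r ζ ω' σ s),
      add_zero, integral_stickyStrategy_mul_drift]
  have hocc_nonneg : 0 ≤ ∫ s in (0:ℝ)..t, if S s ω = ζ then (1:ℝ) else 0 :=
    intervalIntegral.integral_nonneg ht fun s _ => by split_ifs <;> norm_num
  refine ⟨?_, ?_⟩
  · rw [show |r| * ρ * ζ * L t ω = |r| * ζ * (ρ * L t ω) by ring, ← hocc t ht]
    exact hgains_eq
  · exact hgains_eq ▸ mul_nonneg (by positivity) hocc_nonneg

/-- In the sticky model with `r ≠ 0`, for the strategy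
`H_t = sgn(-r) e^{rt} 1_{S_t = ζ}`, the gains from trading the discounted price
`S̃_t = e^{-rt} S_t` satisfy `∫₀ᵗ H_s dS̃_s = |r| ρ ζ L_t^ζ(S) ≥ 0` for all `t ≥ 0`.
Here `SIS` is the abstract stochastic integral against `S̃`, `SIB` the one against `B`,
the hypothesis `hassoc` expresses the semimartingale decomposition
`dS̃_t = (μ 1_{S_t≠ζ} - r) S̃_t dt + σ S̃_t 1_{S_t≠ζ} dB_t` at the level of integrals,
`L` is the (continuous, nondecreasing) local time of `S` at `ζ`, and `hsticky` is the sticky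
occupation identity `∫₀ᵗ 1_{S_s = ζ} ds = ρ L_t`. -/
theorem sticky_arbitrage_gains_identity
    (F : Filtration ℝ mΩ) (P : Measure Ω) [IsProbabilityMeasure P]
    (B S L : ℝ → Ω → ℝ) (μ r σ ζ ρ x : ℝ)
    (hσ : 0 < σ) (hζ : 0 < ζ) (hρ : 0 < ρ) (hr : r ≠ 0) (hx : 0 < x)
    (hB : IsBrownianMotion F B P)
    (hS0 : ∀ᵐ ω ∂P, S 0 ω = x)
    (hScont : ∀ᵐ ω ∂P, Continuous fun t => S t ω)
    (hL0 : ∀ ω, L 0 ω = 0)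
    (hLmono : ∀ ω, Monotone fun t => L t ω)
    (hLcont : ∀ ω, Continuous fun t => L t ω)
    (hsticky : ∀ᵐ ω ∂P, ∀ t ≥ (0:ℝ),
      (∫ s in (0:ℝ)..t, (if S s ω = ζ then (1:ℝ) else 0)) = ρ * L t ω)
    (SIB : (ℝ → Ω → ℝ) → ℝ → Ω → ℝ)
    (SIS : (ℝ → Ω → ℝ) → ℝ → Ω → ℝ)
    (hassoc : ∀ H : ℝ → Ω → ℝ, ∀ᵐ ω ∂P, ∀ t ≥ (0:ℝ),
      SIS H t ω
        = (∫ s in (0:ℝ)..t,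
            H s ω * ((μ * (if S s ω = ζ then 0 else 1) - r) * (Real.exp (-r*s) * S s ω)))
          + SIB (fun s ω' => H s ω'
              * (σ * (Real.exp (-r*s) * S s ω') * (if S s ω' = ζ then 0 else 1))) t ω)
    (hSIB_zero : ∀ H : ℝ → Ω → ℝ, (∀ t ω, H t ω = 0) → ∀ t ω, SIB H t ω = 0) :
    ∀ᵐ ω ∂P, ∀ t ≥ (0:ℝ),
      SIS (fun s ω' => Real.sign (-r) * Real.exp (r*s)
          * (if S s ω' = ζ then 1 else 0)) t ω
        = |r| * ρ * ζ * L t ω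
      ∧ 0 ≤ SIS (fun s ω' => Real.sign (-r) * Real.exp (r*s)
          * (if S s ω' = ζ then 1 else 0)) t ω :=
  sticky_arbitrage_gains_identity_general P S L μ r σ ζ ρ hζ hsticky SIB SIS hassoc hSIB_zero

end
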